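/- arXiv:1506.02309 — 2 statements merged into one kernel-verified Lean document; each statement's English description precedes it below -/
import Mathlib

section
/- The N6 algebra with parameter κ is associative if and only if κ = 0 or κ = 1. -/
/-- The N6 Balinskiǐ–Novikov product on ℝ² with parameter κ :
`e¹·e² = e¹`, `e²·e¹ = κ e¹`, `e²·e² = e²`, `e¹·e¹ = 0`. -/
def mulN6 (κ : ℝ) (a b : ℝ × ℝ) : ℝ × ℝ := (a.1 * b.2 + κ * a.2 * b.1, a.2 * b.2)

/-- The N6 algebra with parameter κ is associative iff κ = 0 or κ = 1. -/
theorem N6_assoc_iff (κ : ℝ) :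
    (∀ a b c : ℝ × ℝ, mulN6 κ (mulN6 κ a b) c = mulN6 κ a (mulN6 κ b c)) ↔
      κ = 0 ∨ κ = 1 := by
  constructor
  · intro h
    have h2 := h (0, 1) (0, 1) (1, 0)
    simp [mulN6, Prod.ext_iff] at h2
    have hk : κ * (κ - 1) = 0 := by nlinarith
    rcases mul_eq_zero.mp hk with h0 | h1
    · exact Or.inl h0
    · exact Or.inr (by linarith)
  · rintro (rfl | rfl) a b c <;> simp [mulN6, Prod.ext_iff] <;> constructor <;> ring
end

section
/- For the T3 pencil of metrics, with g₂ the 2×2 matrix with entries g₂¹¹ = g₂²² = 0, g₂¹² = g₂²¹ = -u¹, and g₁ the constant matrix with g₁¹¹ = 0, g₁¹² = g₁²¹ = η¹², g₁²² = η²² (η¹² ≠ 0), the affinor L = g₂ g₁⁻¹ has a single eigenvalue -u¹/η¹² of algebraic multiplicity 2, and if η²² ≠ 0 and u¹ ≠ 0 then L is not diagonalizable. -/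
/-!
Since `g₁⁻¹ = [[-η²²/(η¹²)², 1/η¹²], [1/η¹², 0]]`, the affinor is the lower triangular matrix
`L = [[-u¹/η¹², 0], [u¹η²²/(η¹²)², -u¹/η¹²]]`, whose characteristic polynomial is read off its
diagonal. A diagonalizable matrix with a single eigenvalue `a` is conjugate to, hence equal to,
the scalar matrix `a • 1`; but `L` has the nonzero off-diagonal entry `u¹η²²/(η¹²)²`.
-/

open Polynomial

namespace Matrix

variable {K : Type*} [Field K]

theorem inv_fin_two_of_zero_zero {b c : K} (hb : b ≠ 0) :
    (!![0, b; b, c])⁻¹ = !![-c / b ^ 2, 1 / b; 1 / b, 0] := by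
  refine inv_eq_right_inv ?_
  ext i j
  fin_cases i <;> fin_cases j <;> simp [field]

theorem charpoly_fin_two_of_zero_one (a c d : K) :
    (!![a, 0; c, d]).charpoly = (X - C a) * (X - C d) := by
  rw [← charpoly_transpose, charpoly_of_isUpperTriangular]
  · simp [Fin.prod_univ_two]
  · intro i j hij
    fin_cases i <;> fin_cases j <;> simp_all

theorem eq_scalar_of_diagonalizable_of_charpoly_eq_pow {n : Type*} [Fintype n] [DecidableEq n]
    {A P D : Matrix n n K} (hP : IsUnit P) (hD : D.IsDiag) (hA : A = P * D * P⁻¹) {a : K}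
    {k : ℕ} (h : A.charpoly = (X - C a) ^ k) : A = scalar n a := by
  obtain ⟨U, rfl⟩ := hP
  obtain ⟨d, rfl⟩ : ∃ d, D = diagonal d := ⟨D.diag, hD.diagonal_diag.symm⟩
  have hchar : ∏ i, (X - C (d i)) = (X - C a) ^ k := by
    rw [← charpoly_diagonal, ← h, hA, charpoly_units_conj]
  have hd : d = fun _ ↦ a := by
    funext i
    have hroot : (∏ j, (X - C (d j))).eval (d i) = 0 := by
      rw [eval_prod]
      exact Finset.prod_eq_zero (Finset.mem_univ i) (by simp)
    rw [hchar, eval_pow, eval_sub, eval_X, eval_C] at hroot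
    exact sub_eq_zero.mp (eq_zero_of_pow_eq_zero hroot)
  rw [hA, hd, ← scalar_apply, ← (scalar_commute a (Commute.all a) U.val).eq, mul_assoc,
    ← coe_units_inv, Units.mul_inv, mul_one]

end Matrix

theorem affinor_T3_eq {η12 η22 u1 : ℝ} (h12 : η12 ≠ 0) :
    (!![0, -u1; -u1, 0] : Matrix (Fin 2) (Fin 2) ℝ) * (!![0, η12; η12, η22])⁻¹
      = !![-u1 / η12, 0; u1 * η22 / η12 ^ 2, -u1 / η12] := by
  rw [Matrix.inv_fin_two_of_zero_zero h12]
  ext i j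
  fin_cases i <;> fin_cases j <;> simp [field]

/-- For the T3 pencil of metrics, the affinor `L = g₂ * g₁⁻¹` has characteristic
polynomial `(λ + u¹/η¹²)²` (a single eigenvalue `-u¹/η¹²` of algebraic
multiplicity 2), and if `η²² ≠ 0` and `u¹ ≠ 0` then `L` is not diagonalizable. -/
theorem T3_affinor (η12 η22 u1 : ℝ) (h12 : η12 ≠ 0) :
    ((!![0, -u1; -u1, 0] : Matrix (Fin 2) (Fin 2) ℝ) *
        (!![0, η12; η12, η22] : Matrix (Fin 2) (Fin 2) ℝ)⁻¹).charpoly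
      = (X + C (u1 / η12)) ^ 2 ∧
    (η22 ≠ 0 → u1 ≠ 0 →
      ¬ ∃ (P D : Matrix (Fin 2) (Fin 2) ℝ), IsUnit P ∧ D.IsDiag ∧
        (!![0, -u1; -u1, 0] : Matrix (Fin 2) (Fin 2) ℝ) *
            (!![0, η12; η12, η22] : Matrix (Fin 2) (Fin 2) ℝ)⁻¹
          = P * D * P⁻¹) := by
  have hchar : (!![-u1 / η12, 0; u1 * η22 / η12 ^ 2, -u1 / η12]).charpoly
      = (X - C (-u1 / η12)) ^ 2 := by
    rw [Matrix.charpoly_fin_two_of_zero_one, sq]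
  rw [affinor_T3_eq h12]
  refine ⟨by rw [hchar, neg_div, C_neg, sub_neg_eq_add], ?_⟩
  rintro h22 hu ⟨P, D, hP, hD, hL⟩
  have hscalar := Matrix.eq_scalar_of_diagonalizable_of_charpoly_eq_pow hP hD hL hchar
  have h10 := congrFun (congrFun hscalar 1) 0
  simp [h12, h22, hu] at h10
end
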